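/- arXiv:2202.04729 — 4 statements merged into one kernel-verified Lean document; each statement's English description precedes it below -/
import Mathlib

section
/- Let n ∈ ℕ and (κ,k) ∈ L_n. Then the general fractional derivative D_{(k)} is a left-inverse of the general fractional integral I_{(κ)} on C_{-1}(0,∞): for every f ∈ C_{-1}(0,∞) and every t > 0, (D_{(k)} I_{(κ)} f)(t) = (d^n/dt^n)(k*(κ*f))(t) = f(t). -/
noncomputable section

/-- Laplace convolution `(f*g)(t) = ∫_0^t f(t-τ) g(τ) dτ`. -/
def conv (f g : ℝ → ℝ) : ℝ → ℝ := fun t => ∫ τ in (0:ℝ)..t, f (t - τ) * g τ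

/-- The space `C_{-1}(0,∞)`: functions of the form `t^q f₁(t)` with `q > -1`,
`f₁` continuous on `[0,∞)`. -/
def Cm1 (f : ℝ → ℝ) : Prop :=
  ∃ q : ℝ, -1 < q ∧ ∃ f₁ : ℝ → ℝ, ContinuousOn f₁ (Set.Ici 0) ∧
    ∀ t : ℝ, 0 < t → f t = t ^ q * f₁ t

/-- The subspace `C_{-1,0}(0,∞)`: as above with `-1 < q < 0`. -/
def Cm10 (f : ℝ → ℝ) : Prop :=
  ∃ q : ℝ, -1 < q ∧ q < 0 ∧ ∃ f₁ : ℝ → ℝ, ContinuousOn f₁ (Set.Ici 0) ∧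
    ∀ t : ℝ, 0 < t → f t = t ^ q * f₁ t

/-- `h_p(t) = t^(p-1)/Γ(p)`. -/
def hker (p : ℝ) : ℝ → ℝ := fun t => t ^ (p - 1) / Real.Gamma p

/-- The Sonine kernel class `L_n`: `κ ∈ C_{-1}`, `k ∈ C_{-1,0}`, and
`(κ*k)(t) = h_n(t)` for all `t > 0`. -/
def SonineL (n : ℕ) (κ k : ℝ → ℝ) : Prop :=
  Cm1 κ ∧ Cm10 k ∧ ∀ t : ℝ, 0 < t → conv κ k t = hker n t

/-- The general fractional integral `(I_{(κ)} f)(t) = (κ*f)(t)`. -/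
def GFI (κ f : ℝ → ℝ) : ℝ → ℝ := conv κ f

/-- The general fractional derivative of Riemann–Liouville type
`(D_{(k)} f)(t) = (d^n/dt^n)(k*f)(t)`. -/
def GFD (n : ℕ) (k f : ℝ → ℝ) : ℝ → ℝ := iteratedDeriv n (conv k f)

/-!
Extend `κ`, `k` and `f` by zero to `(-∞, 0]`; the Laplace convolution becomes the convolution on
`ℝ`. The extensions are bounded on each `(0, T]` by multiples of `x ^ q` with `q > -1`, a class
that the Beta integral shows to be closed under convolution, so Fubini's theorem gives
associativity at every point: `k * (κ * f) = (k * κ) * f = h_n * f` on `(0, ∞)`. By Cauchy's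
formula for repeated integration, `h_n * f` is the `n`-fold primitive of `f`, and its `n`-th
derivative is `f` wherever `f` is continuous, in particular on `(0, ∞)`.
-/

open MeasureTheory Set Real Filter Topology
open scoped Convolution
open ContinuousLinearMap (mul)

section BetaIntegral

variable {a c : ℝ}

theorem intervalIntegrable_rpow_mul_one_sub_rpow (ha : -1 < a) (hc : -1 < c) :
    IntervalIntegrable (fun u : ℝ => u ^ a * (1 - u) ^ c) volume 0 1 := by
  have hβ := (Complex.betaIntegral_convergent (u := a + 1) (v := c + 1)
    (by simp; linarith) (by simp; linarith)).norm
  refine hβ.congr fun u hu => ?_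
  rw [uIoc_of_le zero_le_one] at hu
  simp only [add_sub_cancel_right]
  rcases hu.2.eq_or_lt with rfl | hu1
  · simp
  · rw [norm_mul, show (1 : ℂ) - u = ((1 - u : ℝ) : ℂ) by push_cast; ring,
      Complex.norm_cpow_eq_rpow_re_of_pos hu.1, Complex.norm_cpow_eq_rpow_re_of_pos (by linarith)]
    simp

theorem rpow_mul_sub_rpow_eq_rpow_add_mul {x τ : ℝ} (hx : 0 < x) (hτ : τ ∈ Icc 0 x) :
    x ^ (a + c) * ((x⁻¹ * τ) ^ a * (1 - x⁻¹ * τ) ^ c) = τ ^ a * (x - τ) ^ c := by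
  have h : 1 - x⁻¹ * τ = x⁻¹ * (x - τ) := by field_simp
  rw [h, mul_rpow (by positivity) hτ.1, mul_rpow (by positivity) (sub_nonneg.2 hτ.2),
    inv_rpow hx.le, inv_rpow hx.le, rpow_add hx]
  field_simp

theorem integral_rpow_mul_sub_rpow {x : ℝ} (hx : 0 < x) :
    ∫ τ in (0:ℝ)..x, τ ^ a * (x - τ) ^ c =
      x ^ (a + c + 1) * ∫ u in (0:ℝ)..1, u ^ a * (1 - u) ^ c := by
  have := intervalIntegral.integral_comp_mul_left (fun u : ℝ => u ^ a * (1 - u) ^ c)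
    (a := 0) (b := x) (inv_ne_zero hx.ne')
  rw [mul_zero, inv_mul_cancel₀ hx.ne', inv_inv, smul_eq_mul] at this
  rw [rpow_add hx, rpow_one, mul_assoc, ← this, ← intervalIntegral.integral_const_mul]
  refine intervalIntegral.integral_congr fun τ hτ => ?_
  rw [uIcc_of_le hx.le] at hτ
  exact (rpow_mul_sub_rpow_eq_rpow_add_mul hx hτ).symm

theorem integrableOn_rpow_mul_sub_rpow (ha : -1 < a) (hc : -1 < c) (x : ℝ) :
    IntegrableOn (fun τ => τ ^ a * (x - τ) ^ c) (Ioc 0 x) := by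
  rcases le_or_gt x 0 with hx | hx
  · simp [Ioc_eq_empty_of_le hx]
  have h := ((intervalIntegrable_rpow_mul_one_sub_rpow ha hc).comp_mul_left
    (c := x⁻¹)).const_mul (x ^ (a + c))
  rw [zero_div, one_div, inv_inv] at h
  refine (h.congr fun τ hτ => ?_).1
  rw [uIoc_of_le hx.le] at hτ
  exact rpow_mul_sub_rpow_eq_rpow_add_mul hx (Ioc_subset_Icc_self hτ)

theorem integrable_indicator_rpow_mul_sub_rpow (ha : -1 < a) (hc : -1 < c) (C x : ℝ) :
    Integrable ((Ioo 0 x).indicator fun τ => C * (τ ^ a * (x - τ) ^ c)) :=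
  (integrable_indicator_iff measurableSet_Ioo).2
    (((integrableOn_rpow_mul_sub_rpow ha hc x).mono_set Ioo_subset_Ioc_self).const_mul C)

end BetaIntegral

section Causal

variable {f f' g g' : ℝ → ℝ}

theorem conv_congr (hf : EqOn f f' (Ioi 0)) (hg : EqOn g g' (Ioi 0)) :
    EqOn (conv f g) (conv f' g') (Ioi 0) := by
  intro t ht
  simp only [conv, intervalIntegral.integral_of_le (le_of_lt ht), integral_Ioc_eq_integral_Ioo]
  refine setIntegral_congr_fun measurableSet_Ioo fun τ hτ => ?_
  rw [hf (sub_pos.2 hτ.2), hg hτ.1]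

theorem conv_eq_convolution (hf : ∀ x ≤ 0, f x = 0) (hg : ∀ x ≤ 0, g x = 0) :
    conv f g = f ⋆[mul ℝ ℝ] g := by
  ext x
  have hvanish : ∀ τ ∉ Ioc 0 x, f (x - τ) * g τ = 0 := by
    intro τ hτ
    rcases le_or_gt τ 0 with h | h
    · rw [hg τ h, mul_zero]
    · rw [hf (x - τ) (by linarith [not_and.1 hτ h]), zero_mul]
  rw [convolution_mul_swap, conv, ← setIntegral_eq_integral_of_forall_compl_eq_zero hvanish]
  rcases le_or_gt 0 x with hx | hx
  · rw [intervalIntegral.integral_of_le hx]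
  · rw [intervalIntegral.integral_of_ge hx.le, Ioc_eq_empty_of_le hx.le, Measure.restrict_empty,
      integral_zero_measure, setIntegral_eq_zero_of_forall_eq_zero fun τ hτ => by
        rw [hg τ hτ.2, mul_zero], neg_zero]

theorem convolution_mul_comm (f g : ℝ → ℝ) : f ⋆[mul ℝ ℝ] g = g ⋆[mul ℝ ℝ] f := by
  ext x
  rw [convolution_mul, convolution_mul_swap]
  exact integral_congr_ae (Eventually.of_forall fun τ => mul_comm _ _)

theorem eq_of_eqOn_Ioi (hf : ∀ x ≤ 0, f x = 0) (hg : ∀ x ≤ 0, g x = 0) (h : EqOn f g (Ioi 0)) :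
    f = g := by
  ext x
  rcases le_or_gt x 0 with hx | hx
  · rw [hf x hx, hg x hx]
  · exact h hx

theorem norm_mul_sub_le_indicator {a c Mf Mg x : ℝ} (hf0 : ∀ y ≤ 0, f y = 0)
    (hg0 : ∀ y ≤ 0, g y = 0) (hf : ∀ y ∈ Ioo 0 x, |f y| ≤ Mf * y ^ a)
    (hg : ∀ y ∈ Ioo 0 x, |g y| ≤ Mg * y ^ c) (τ : ℝ) :
    ‖f τ * g (x - τ)‖ ≤ (Ioo 0 x).indicator (fun τ => Mf * Mg * (τ ^ a * (x - τ) ^ c)) τ := by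
  by_cases hτ : τ ∈ Ioo 0 x
  · have hxτ : x - τ ∈ Ioo 0 x := ⟨sub_pos.2 hτ.2, by linarith [hτ.1]⟩
    rw [indicator_of_mem hτ, norm_mul, Real.norm_eq_abs, Real.norm_eq_abs,
      show Mf * Mg * (τ ^ a * (x - τ) ^ c) = Mf * τ ^ a * (Mg * (x - τ) ^ c) by ring]
    exact mul_le_mul (hf τ hτ) (hg _ hxτ) (abs_nonneg _) ((abs_nonneg _).trans (hf τ hτ))
  · rw [indicator_of_notMem hτ]
    rcases le_or_gt τ 0 with h | h
    · simp [hf0 τ h]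
    · simp [hg0 (x - τ) (by linarith [not_and.1 hτ h])]

end Causal

structure IsCausalPowerBounded (f : ℝ → ℝ) : Prop where
  aestronglyMeasurable : AEStronglyMeasurable f
  eq_zero_of_nonpos : ∀ x ≤ 0, f x = 0
  exists_rpow_bound : ∃ q : ℝ, -1 < q ∧ ∀ T, ∃ M, ∀ x ∈ Ioc 0 T, |f x| ≤ M * x ^ q

namespace IsCausalPowerBounded

variable {f g h : ℝ → ℝ}

theorem norm (hf : IsCausalPowerBounded f) : IsCausalPowerBounded fun x => ‖f x‖ where
  aestronglyMeasurable := hf.aestronglyMeasurable.norm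
  eq_zero_of_nonpos x hx := by simp [hf.eq_zero_of_nonpos x hx]
  exists_rpow_bound := by simpa using hf.exists_rpow_bound

theorem intervalIntegrable (hf : IsCausalPowerBounded f) (a b : ℝ) :
    IntervalIntegrable f volume a b := by
  obtain ⟨q, hq, hbound⟩ := hf.exists_rpow_bound
  have hIic : IntegrableOn f (Iic 0) :=
    integrableOn_zero.congr_fun (fun x hx => (hf.eq_zero_of_nonpos x hx).symm) measurableSet_Iic
  obtain ⟨M, hM⟩ := hbound (max a b)
  have hIoc : IntegrableOn f (Ioc 0 (max a b)) :=
    ((intervalIntegral.intervalIntegrable_rpow' hq).1.const_mul M).mono'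
      hf.aestronglyMeasurable.restrict ((ae_restrict_iff' measurableSet_Ioc).2 (ae_of_all _ hM))
  refine ((hIic.union hIoc).mono_set fun x hx => ?_).intervalIntegrable
  rcases le_or_gt x 0 with h | h
  · exact Or.inl h
  · exact Or.inr ⟨h, hx.2.trans (by simp)⟩

theorem convolutionExistsAt (hf : IsCausalPowerBounded f) (hg : IsCausalPowerBounded g) (x : ℝ) :
    ConvolutionExistsAt f g x (mul ℝ ℝ) := by
  obtain ⟨a, ha, hfb⟩ := hf.exists_rpow_bound
  obtain ⟨c, hc, hgb⟩ := hg.exists_rpow_bound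
  obtain ⟨Mf, hMf⟩ := hfb x
  obtain ⟨Mg, hMg⟩ := hgb x
  refine (integrable_indicator_rpow_mul_sub_rpow ha hc (Mf * Mg) x).mono'
    (hf.aestronglyMeasurable.convolution_integrand_snd _ hg.aestronglyMeasurable x)
    (ae_of_all _ fun τ => ?_)
  exact norm_mul_sub_le_indicator hf.eq_zero_of_nonpos hg.eq_zero_of_nonpos
    (fun y hy => hMf y (Ioo_subset_Ioc_self hy)) (fun y hy => hMg y (Ioo_subset_Ioc_self hy)) τ

theorem convolution (hf : IsCausalPowerBounded f) (hg : IsCausalPowerBounded g) :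
    IsCausalPowerBounded (f ⋆[mul ℝ ℝ] g) where
  aestronglyMeasurable :=
    (hf.aestronglyMeasurable.convolution_integrand _ hg.aestronglyMeasurable).integral_prod_right'
  eq_zero_of_nonpos x hx := by
    rw [convolution_mul]
    refine integral_eq_zero_of_ae (ae_of_all _ fun τ => ?_)
    rcases le_or_gt τ 0 with h | h
    · simp [hf.eq_zero_of_nonpos τ h]
    · simp [hg.eq_zero_of_nonpos (x - τ) (by linarith)]
  exists_rpow_bound := by
    obtain ⟨a, ha, hfb⟩ := hf.exists_rpow_bound
    obtain ⟨c, hc, hgb⟩ := hg.exists_rpow_bound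
    refine ⟨a + c + 1, by linarith, fun T => ?_⟩
    obtain ⟨Mf, hMf⟩ := hfb T
    obtain ⟨Mg, hMg⟩ := hgb T
    refine ⟨Mf * Mg * ∫ u in (0:ℝ)..1, u ^ a * (1 - u) ^ c, fun x hx => ?_⟩
    have hsub : Ioo 0 x ⊆ Ioc 0 T := fun y hy => ⟨hy.1, hy.2.le.trans hx.2⟩
    calc |(f ⋆[mul ℝ ℝ] g) x|
        ≤ ∫ τ, (Ioo 0 x).indicator (fun τ => Mf * Mg * (τ ^ a * (x - τ) ^ c)) τ := by
          rw [← Real.norm_eq_abs, convolution_mul]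
          exact norm_integral_le_of_norm_le (integrable_indicator_rpow_mul_sub_rpow ha hc _ x)
            (ae_of_all _ (norm_mul_sub_le_indicator hf.eq_zero_of_nonpos hg.eq_zero_of_nonpos
              (fun y hy => hMf y (hsub hy)) (fun y hy => hMg y (hsub hy))))
      _ = Mf * Mg * (∫ u in (0:ℝ)..1, u ^ a * (1 - u) ^ c) * x ^ (a + c + 1) := by
          rw [integral_indicator measurableSet_Ioo, ← integral_Ioc_eq_integral_Ioo,
            integral_const_mul, ← intervalIntegral.integral_of_le hx.1.le,
            integral_rpow_mul_sub_rpow hx.1]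
          ring

theorem convolution_assoc (hf : IsCausalPowerBounded f) (hg : IsCausalPowerBounded g)
    (hh : IsCausalPowerBounded h) :
    (f ⋆[mul ℝ ℝ] g) ⋆[mul ℝ ℝ] h = f ⋆[mul ℝ ℝ] (g ⋆[mul ℝ ℝ] h) := by
  ext x
  exact MeasureTheory.convolution_assoc (mul ℝ ℝ) (mul ℝ ℝ) (mul ℝ ℝ) (mul ℝ ℝ)
    (fun _ _ _ => mul_assoc _ _ _) hf.aestronglyMeasurable hg.aestronglyMeasurable
    hh.aestronglyMeasurable (ae_of_all _ (hf.convolutionExistsAt hg))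
    (ae_of_all _ (hg.norm.convolutionExistsAt hh.norm))
    (hf.norm.convolutionExistsAt (hg.norm.convolution hh.norm) x)

end IsCausalPowerBounded

section Cm1

variable {f : ℝ → ℝ}

theorem Cm1.continuousOn (hf : Cm1 f) : ContinuousOn f (Ioi 0) := by
  obtain ⟨q, -, f₁, hf₁, hfe⟩ := hf
  refine (((continuousOn_id.rpow_const fun x hx => Or.inl (ne_of_gt hx)).mul
    (hf₁.mono Ioi_subset_Ici_self))).congr fun x hx => hfe x hx

theorem Cm1.isCausalPowerBounded_indicator (hf : Cm1 f) :
    IsCausalPowerBounded ((Ioi 0).indicator f) where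
  aestronglyMeasurable := (aestronglyMeasurable_indicator_iff measurableSet_Ioi).2
    (hf.continuousOn.aestronglyMeasurable measurableSet_Ioi)
  eq_zero_of_nonpos x hx := indicator_of_notMem (not_lt.2 hx) f
  exists_rpow_bound := by
    obtain ⟨q, hq, f₁, hf₁, hfe⟩ := hf
    refine ⟨q, hq, fun T => ?_⟩
    obtain ⟨M, hM⟩ := isCompact_Icc.exists_bound_of_continuousOn
      (hf₁.mono (Icc_subset_Ici_self : Icc 0 T ⊆ Ici 0))
    refine ⟨M, fun x hx => ?_⟩
    have hxq := rpow_nonneg hx.1.le q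
    rw [indicator_of_mem (show x ∈ Ioi 0 from hx.1), hfe x hx.1, abs_mul, abs_of_nonneg hxq,
      mul_comm]
    exact mul_le_mul_of_nonneg_right ((norm_eq_abs _).symm.trans_le <|
      hM x (Ioc_subset_Icc_self hx)) hxq

theorem Cm10.cm1 (hf : Cm10 f) : Cm1 f := by
  obtain ⟨q, hq, -, f₁, hf₁, hfe⟩ := hf
  exact ⟨q, hq, f₁, hf₁, hfe⟩

end Cm1

theorem hker_natCast_succ (m : ℕ) : hker (m + 1 : ℕ) = fun y : ℝ => y ^ m / m.factorial := by
  ext y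
  rw [hker, Nat.cast_succ, add_sub_cancel_right, rpow_natCast, Real.Gamma_nat_eq_factorial]

theorem cm1_hker_natCast_succ (m : ℕ) : Cm1 (hker (m + 1 : ℕ)) :=
  ⟨m, by linarith [m.cast_nonneg (α := ℝ)], fun _ => (m.factorial : ℝ)⁻¹, continuousOn_const,
    fun t _ => by rw [hker_natCast_succ, rpow_natCast]; exact div_eq_mul_inv _ _⟩

def iterPrimitive (f : ℝ → ℝ) : ℕ → ℝ → ℝ
  | 0 => f
  | m + 1 => fun x => ∫ y in (0:ℝ)..x, iterPrimitive f m y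

section IterPrimitive

variable {f : ℝ → ℝ}

theorem continuous_iterPrimitive_succ (hfi : ∀ a b, IntervalIntegrable f volume a b) (m : ℕ) :
    Continuous (iterPrimitive f (m + 1)) := by
  induction m with
  | zero => exact intervalIntegral.continuous_primitive hfi 0
  | succ m ih =>
    exact intervalIntegral.continuous_primitive (fun a b => ih.intervalIntegrable a b) 0

theorem intervalIntegrable_iterPrimitive (hfi : ∀ a b, IntervalIntegrable f volume a b) :
    ∀ m a b, IntervalIntegrable (iterPrimitive f m) volume a b
  | 0 => hfi
  | m + 1 => (continuous_iterPrimitive_succ hfi m).intervalIntegrable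

theorem continuousOn_iterPrimitive (hfi : ∀ a b, IntervalIntegrable f volume a b)
    (hfc : ContinuousOn f (Ioi 0)) : ∀ m, ContinuousOn (iterPrimitive f m) (Ioi 0)
  | 0 => hfc
  | m + 1 => (continuous_iterPrimitive_succ hfi m).continuousOn

theorem hasDerivAt_iterPrimitive_succ (hfi : ∀ a b, IntervalIntegrable f volume a b)
    (hfc : ContinuousOn f (Ioi 0)) (m : ℕ) {x : ℝ} (hx : 0 < x) :
    HasDerivAt (iterPrimitive f (m + 1)) (iterPrimitive f m x) x :=
  intervalIntegral.integral_hasDerivAt_right (intervalIntegrable_iterPrimitive hfi m 0 x)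
    ((continuousOn_iterPrimitive hfi hfc m).stronglyMeasurableAtFilter isOpen_Ioi x hx)
    ((continuousOn_iterPrimitive hfi hfc m).continuousAt (Ioi_mem_nhds hx))

theorem iteratedDeriv_iterPrimitive (hfi : ∀ a b, IntervalIntegrable f volume a b)
    (hfc : ContinuousOn f (Ioi 0)) (m : ℕ) {x : ℝ} (hx : 0 < x) :
    iteratedDeriv m (iterPrimitive f m) x = f x := by
  induction m generalizing x with
  | zero => rfl
  | succ m ih =>
    have hderiv : deriv (iterPrimitive f (m + 1)) =ᶠ[𝓝 x] iterPrimitive f m := by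
      filter_upwards [Ioi_mem_nhds hx] with y hy
      exact (hasDerivAt_iterPrimitive_succ hfi hfc m hy).deriv
    rw [iteratedDeriv_succ', hderiv.iteratedDeriv_eq, ih hx]

end IterPrimitive

theorem isCausalPowerBounded_indicator_hker (m : ℕ) :
    IsCausalPowerBounded ((Ioi 0).indicator (hker (m + 1 : ℕ))) :=
  (cm1_hker_natCast_succ m).isCausalPowerBounded_indicator

theorem isCausalPowerBounded_indicator_hker_one :
    IsCausalPowerBounded ((Ioi 0).indicator (hker 1)) := by
  simpa using isCausalPowerBounded_indicator_hker 0

theorem indicator_hker_one_convolution {g : ℝ → ℝ} (hg : ∀ x ≤ 0, g x = 0) :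
    (Ioi 0).indicator (hker 1) ⋆[mul ℝ ℝ] g = fun x => ∫ y in (0:ℝ)..x, g y := by
  rw [← conv_eq_convolution isCausalPowerBounded_indicator_hker_one.eq_zero_of_nonpos hg]
  ext x
  rcases le_or_gt x 0 with hx | hx
  · refine intervalIntegral.integral_congr fun τ hτ => ?_
    rw [uIcc_of_ge hx] at hτ
    simp [hg τ hτ.2]
  · have hone : EqOn ((Ioi 0).indicator (hker 1)) (fun _ => 1) (Ioi 0) := fun y hy => by
      simp [indicator_of_mem hy, hker]
    simpa [conv] using conv_congr hone (fun _ _ => rfl) hx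

theorem indicator_hker_one_convolution_indicator_hker (m : ℕ) :
    (Ioi 0).indicator (hker 1) ⋆[mul ℝ ℝ] (Ioi 0).indicator (hker (m + 1 : ℕ)) =
      (Ioi 0).indicator (hker (m + 1 + 1 : ℕ)) := by
  refine eq_of_eqOn_Ioi (isCausalPowerBounded_indicator_hker_one.convolution
    (isCausalPowerBounded_indicator_hker m)).eq_zero_of_nonpos
    (isCausalPowerBounded_indicator_hker (m + 1)).eq_zero_of_nonpos fun x hx => ?_
  rw [indicator_hker_one_convolution (isCausalPowerBounded_indicator_hker m).eq_zero_of_nonpos,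
    indicator_of_mem hx, hker_natCast_succ]
  beta_reduce
  rw [intervalIntegral.integral_of_le (le_of_lt hx),
    setIntegral_congr_fun measurableSet_Ioc (eqOn_indicator.mono Ioc_subset_Ioi_self),
    hker_natCast_succ, ← intervalIntegral.integral_of_le (le_of_lt hx),
    intervalIntegral.integral_div, integral_pow, Nat.factorial_succ]
  push_cast
  field_simp
  ring

theorem iterPrimitive_succ_eq_convolution {f : ℝ → ℝ} (hf : IsCausalPowerBounded f) (m : ℕ) :
    iterPrimitive f (m + 1) = (Ioi 0).indicator (hker (m + 1 : ℕ)) ⋆[mul ℝ ℝ] f := by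
  induction m with
  | zero =>
    rw [zero_add, Nat.cast_one]
    exact (indicator_hker_one_convolution hf.eq_zero_of_nonpos).symm
  | succ m ih =>
    have hH := isCausalPowerBounded_indicator_hker m
    calc iterPrimitive f (m + 1 + 1) = fun x => ∫ y in (0:ℝ)..x, iterPrimitive f (m + 1) y := rfl
      _ = (Ioi 0).indicator (hker 1) ⋆[mul ℝ ℝ]
            ((Ioi 0).indicator (hker (m + 1 : ℕ)) ⋆[mul ℝ ℝ] f) := by
        rw [ih, indicator_hker_one_convolution (hH.convolution hf).eq_zero_of_nonpos]
      _ = (Ioi 0).indicator (hker (m + 1 + 1 : ℕ)) ⋆[mul ℝ ℝ] f := by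
        rw [← isCausalPowerBounded_indicator_hker_one.convolution_assoc hH hf,
          indicator_hker_one_convolution_indicator_hker]

theorem SonineL.indicator_convolution_indicator {m : ℕ} {κ k : ℝ → ℝ} (h : SonineL (m + 1) κ k) :
    (Ioi 0).indicator k ⋆[mul ℝ ℝ] (Ioi 0).indicator κ = (Ioi 0).indicator (hker (m + 1 : ℕ)) := by
  obtain ⟨hκ, hk, hκk⟩ := h
  have hP := hκ.isCausalPowerBounded_indicator
  have hK := hk.cm1.isCausalPowerBounded_indicator
  rw [convolution_mul_comm]
  refine eq_of_eqOn_Ioi (hP.convolution hK).eq_zero_of_nonpos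
    (isCausalPowerBounded_indicator_hker m).eq_zero_of_nonpos fun x hx => ?_
  rw [← conv_eq_convolution hP.eq_zero_of_nonpos hK.eq_zero_of_nonpos,
    conv_congr eqOn_indicator eqOn_indicator hx, hκk x hx, indicator_of_mem hx]

/-- the GFD is a left inverse of the GFI on `C_{-1}(0,∞)`. -/
theorem GFD_left_inverse_GFI (n : ℕ) (hn : 0 < n) (κ k : ℝ → ℝ)
    (hκk : SonineL n κ k) (f : ℝ → ℝ) (hf : Cm1 f) :
    ∀ t : ℝ, 0 < t →
      GFD n k (GFI κ f) t = f t ∧ iteratedDeriv n (conv k (conv κ f)) t = f t := by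
  intro t ht
  obtain ⟨m, rfl⟩ := Nat.exists_eq_add_one_of_ne_zero hn.ne'
  have hP := hκk.1.isCausalPowerBounded_indicator
  have hK := hκk.2.1.cm1.isCausalPowerBounded_indicator
  have hF := hf.isCausalPowerBounded_indicator
  have hconv :
      EqOn (conv k (conv κ f)) (iterPrimitive ((Ioi 0).indicator f) (m + 1)) (Ioi 0) := by
    intro x hx
    rw [conv_congr eqOn_indicator.symm (conv_congr eqOn_indicator.symm eqOn_indicator.symm) hx,
      conv_eq_convolution hP.eq_zero_of_nonpos hF.eq_zero_of_nonpos,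
      conv_eq_convolution hK.eq_zero_of_nonpos (hP.convolution hF).eq_zero_of_nonpos,
      ← hK.convolution_assoc hP hF, hκk.indicator_convolution_indicator,
      iterPrimitive_succ_eq_convolution hF]
  have key : iteratedDeriv (m + 1) (conv k (conv κ f)) t = f t := by
    rw [(eventuallyEq_of_mem (Ioi_mem_nhds ht) hconv).iteratedDeriv_eq,
      iteratedDeriv_iterPrimitive hF.intervalIntegrable (hf.continuousOn.congr eqOn_indicator) _
        ht,
      eqOn_indicator (mem_Ioi.2 ht)]
  exact ⟨key, key⟩
end
end

section
/- Let n, m ∈ ℕ and (κ,k) ∈ L_n. On the space C^m_{-1,(κ)}(0,∞), the m-fold sequential GFD coincides with the single GFD with kernel k^{<m>}: for every f ∈ C^m_{-1,(κ)}(0,∞) and t > 0, (D^{<m>}_{(k)} f)(t) = (d^{nm}/dt^{nm})(k^{<m>} * f)(t). -/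
open MeasureTheory Set Filter Topology

noncomputable section

/-- Convolution powers: `g^{<1>} = g`, `g^{<j+1>} = g * g^{<j>}` (and `g^{<0>} = 1`). -/
def convPow (g : ℝ → ℝ) : ℕ → ℝ → ℝ
  | 0 => fun _ => 1
  | 1 => g
  | (j + 2) => conv g (convPow g (j + 1))

/-!
Both sides equal `φ t`. Since `k * κ = h_n` and convolution is associative on `C_{-1}`, each
application of `D_{(k)}` removes one factor `κ` from `f = κ^{<m>} * φ`, because
`dⁿ/dtⁿ (h_n * ψ) = ψ` (induction on `n` from `h_1 * ψ = ∫₀ᵗ ψ`). On the other side,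
commutativity and associativity give `k^{<m>} * κ^{<m>} = h_{nm}`, so `k^{<m>} * f = h_{nm} * φ`.

Associativity is Fubini on the triangle `{τ, σ > 0, τ + σ < t}`. Closure of `C_{-1}` under
convolution comes from the substitution `τ = t s`: `(f * g)(t) = t^(a+b+1) H(t)` with
`H(t) = ∫₀¹ (1-s)^a s^b f₁(t(1-s)) g₁(ts) ds`, which is continuous on `[0, ∞)` by dominated
convergence.
Functions in `C_{-1}` are unconstrained on `(-∞, 0]`, so every identity is stated on `Ioi 0`.
-/

lemma conv_comm (f g : ℝ → ℝ) : conv f g = conv g f := by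
  ext t
  have h :=
    intervalIntegral.integral_comp_sub_left (fun τ => g (t - τ) * f τ) t (a := 0) (b := t)
  simp only [sub_sub_cancel, sub_self, sub_zero, mul_comm (g _)] at h
  exact h.trans (intervalIntegral.integral_congr fun x _ => mul_comm _ _)

lemma conv_congr_right (k : ℝ → ℝ) {F G : ℝ → ℝ} (h : EqOn F G (Ioi 0)) :
    EqOn (conv k F) (conv k G) (Ioi 0) := fun t ht =>
  intervalIntegral.integral_congr_uIoo fun τ hτ => by
    rw [uIoo_of_le (le_of_lt ht)] at hτ
    rw [h hτ.1]

lemma conv_congr_left {F G : ℝ → ℝ} (h : EqOn F G (Ioi 0)) (g : ℝ → ℝ) :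
    EqOn (conv F g) (conv G g) (Ioi 0) := by
  rw [conv_comm F, conv_comm G]
  exact conv_congr_right g h

lemma continuousOn_intervalIntegral_mul {w : ℝ → ℝ} {F : ℝ → ℝ → ℝ} {s : Set ℝ}
    {a b : ℝ} (hs : IsClosed s) (hw : IntervalIntegrable w volume a b)
    (hF : ContinuousOn (Function.uncurry F) (s ×ˢ uIcc a b)) :
    ContinuousOn (fun t => ∫ x in a..b, w x * F t x) s := by
  intro t₀ ht₀
  obtain ⟨C, hC⟩ :=
    ((isCompact_Icc.inter_left hs).prod isCompact_uIcc).exists_bound_of_continuousOn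
      (hF.mono (prod_mono inter_subset_left subset_rfl) : ContinuousOn (Function.uncurry F)
        ((s ∩ Icc (t₀ - 1) (t₀ + 1)) ×ˢ uIcc a b))
  have hFt : ∀ t ∈ s, ContinuousOn (F t) (uIcc a b) := fun t ht =>
    hF.comp (continuousOn_const.prodMk continuousOn_id) fun x hx => ⟨ht, hx⟩
  have hnear : ∀ᶠ t in 𝓝[s] t₀, t ∈ s ∩ Icc (t₀ - 1) (t₀ + 1) :=
    inter_mem self_mem_nhdsWithin
      (nhdsWithin_le_nhds (Icc_mem_nhds (by linarith) (by linarith)))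
  refine intervalIntegral.continuousWithinAt_of_dominated_interval
    (bound := fun x => ‖w x‖ * C) ?_ ?_ (hw.norm.mul_const C) ?_
  · filter_upwards [hnear] with t ht
    exact hw.def'.1.mul ((hFt t ht.1).mono uIoc_subset_uIcc |>.aestronglyMeasurable
      measurableSet_uIoc)
  · filter_upwards [hnear] with t ht
    refine Filter.Eventually.of_forall fun x hx => ?_
    rw [norm_mul]
    exact mul_le_mul_of_nonneg_left (hC (t, x) ⟨ht, uIoc_subset_uIcc hx⟩) (norm_nonneg _)
  · refine Filter.Eventually.of_forall fun x hx => continuousWithinAt_const.mul ?_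
    exact hF.comp (continuousOn_id.prodMk continuousOn_const)
      (fun t ht => ⟨ht, uIoc_subset_uIcc hx⟩) t₀ ht₀

namespace Cm1

variable {f g : ℝ → ℝ}

lemma of_Cm10 (hf : Cm10 f) : Cm1 f :=
  let ⟨q, hq, _, rest⟩ := hf
  ⟨q, hq, rest⟩

lemma rpow {q : ℝ} (hq : -1 < q) : Cm1 (· ^ q) :=
  ⟨q, hq, fun _ => 1, continuousOn_const, fun _ _ => (mul_one _).symm⟩

lemma hker {p : ℝ} (hp : 0 < p) : Cm1 (hker p) :=
  ⟨p - 1, by linarith, fun _ => (Real.Gamma p)⁻¹, continuousOn_const, fun _ _ => rfl⟩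

lemma abs (hf : Cm1 f) : Cm1 (|f ·|) := by
  obtain ⟨q, hq, f₁, hc, he⟩ := hf
  refine ⟨q, hq, (|f₁ ·|), hc.abs, fun t ht => ?_⟩
  simp only [he t ht, abs_mul, abs_of_nonneg (Real.rpow_nonneg ht.le q)]

lemma continuousOn_s7 (hf : Cm1 f) : ContinuousOn f (Ioi 0) := by
  obtain ⟨q, -, f₁, hc, he⟩ := hf
  refine ContinuousOn.congr (fun x hx => ?_) he
  exact ((Real.continuousAt_rpow_const x q (Or.inl (ne_of_gt hx))).continuousWithinAt).mul
    ((hc x (mem_Ici.2 (le_of_lt hx))).mono Ioi_subset_Ici_self)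

lemma intervalIntegrable (hf : Cm1 f) {t : ℝ} (ht : 0 ≤ t) :
    IntervalIntegrable f volume 0 t := by
  obtain ⟨q, hq, f₁, hc, he⟩ := hf
  refine ((intervalIntegral.intervalIntegrable_rpow' hq).mul_continuousOn (hc.mono ?_)).congr_uIoo
    (fun x hx => (he x ?_).symm)
  · rw [uIcc_of_le ht]; exact Icc_subset_Ici_self
  · rw [uIoo_of_le ht] at hx; exact hx.1

lemma intervalIntegrable_conv_integrand (hf : Cm1 f) (hg : Cm1 g) {t : ℝ} (ht : 0 ≤ t) :
    IntervalIntegrable (fun τ => f (t - τ) * g τ) volume 0 t := by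
  rcases ht.eq_or_lt with rfl | ht
  · exact IntervalIntegrable.refl
  have hft : ContinuousOn (fun τ => f (t - τ)) (Icc 0 (t / 2)) :=
    hf.continuousOn_s7.comp (continuousOn_const.sub continuousOn_id) fun τ hτ => by
      simp only [mem_Ioi]; linarith [hτ.2]
  have hgt : ContinuousOn g (Icc (t / 2) t) :=
    hg.continuousOn_s7.mono fun τ hτ => by simp only [mem_Ioi]; linarith [hτ.1]
  refine IntervalIntegrable.trans (b := t / 2) ?_ ?_
  · exact (hg.intervalIntegrable (by linarith)).continuousOn_mul
      (by rwa [uIcc_of_le (by linarith)])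
  · have hfl : IntervalIntegrable (fun τ => f (t - τ)) volume (t / 2) t := by
      simpa [show t - t / 2 = t / 2 by ring] using
        ((hf.intervalIntegrable (by linarith : 0 ≤ t / 2)).comp_sub_left t).symm
    exact hfl.mul_continuousOn (by rwa [uIcc_of_le (by linarith)])

lemma conv (hf : Cm1 f) (hg : Cm1 g) : Cm1 (conv f g) := by
  obtain ⟨a, ha, f₁, hf₁, hf_eq⟩ := hf
  obtain ⟨b, hb, g₁, hg₁, hg_eq⟩ := hg
  refine ⟨a + b + 1, by linarith,
    fun t => ∫ s in (0:ℝ)..1, (1 - s) ^ a * s ^ b * (f₁ (t * (1 - s)) * g₁ (t * s)),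
    continuousOn_intervalIntegral_mul isClosed_Ici ?_ ?_, fun t ht => ?_⟩
  · simpa using (rpow ha).intervalIntegrable_conv_integrand (rpow hb) zero_le_one
  · rw [uIcc_of_le zero_le_one]
    refine (hf₁.comp (by fun_prop) fun p hp => ?_).mul (hg₁.comp (by fun_prop) fun p hp => ?_)
    · exact mul_nonneg hp.1 (sub_nonneg.2 hp.2.2)
    · exact mul_nonneg hp.1 hp.2.1
  calc _ = t * ∫ s in (0:ℝ)..1, f (t - t * s) * g (t * s) := by
        rw [intervalIntegral.mul_integral_comp_mul_left (f := fun τ => f (t - τ) * g τ),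
          mul_zero, mul_one]
        rfl
    _ = t * ∫ s in (0:ℝ)..1, t ^ (a + b) *
          ((1 - s) ^ a * s ^ b * (f₁ (t * (1 - s)) * g₁ (t * s))) := by
        congr 1
        refine intervalIntegral.integral_congr_uIoo fun s hs => ?_
        rw [uIoo_of_le zero_le_one] at hs
        have h1s : 0 < 1 - s := sub_pos.2 hs.2
        rw [show t - t * s = t * (1 - s) by ring, hf_eq _ (mul_pos ht h1s),
          hg_eq _ (mul_pos ht hs.1), Real.mul_rpow ht.le h1s.le, Real.mul_rpow ht.le hs.1.le,
          Real.rpow_add ht]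
        ring
    _ = _ := by
        rw [intervalIntegral.integral_const_mul, Real.rpow_add_one ht.ne']
        ring

end Cm1

def triangleIntegrand (f g h : ℝ → ℝ) (t : ℝ) : ℝ × ℝ → ℝ :=
  {p : ℝ × ℝ | 0 < p.1 ∧ 0 < p.2 ∧ p.1 + p.2 < t}.indicator
    fun p => f (t - p.1 - p.2) * g p.2 * h p.1

lemma triangleIntegrand_section (f g h : ℝ → ℝ) (t τ : ℝ) :
    (fun σ => triangleIntegrand f g h t (τ, σ)) = (Ioo 0 t).indicator
      (fun τ => (Ioo 0 (t - τ)).indicator fun σ => f (t - τ - σ) * g σ * h τ) τ := by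
  ext σ
  by_cases hτ : τ ∈ Ioo 0 t <;> by_cases hσ : σ ∈ Ioo 0 (t - τ) <;>
    simp only [triangleIntegrand, indicator, mem_ofPred_eq, hτ, hσ, if_true, if_false,
      Pi.zero_apply] <;> simp only [mem_Ioo] at hτ hσ
  · rw [if_pos ⟨hτ.1, hσ.1, by linarith⟩]
  · rw [if_neg fun h => hσ ⟨h.2.1, by linarith⟩]
  · rw [if_neg fun h => hτ ⟨h.1, by linarith⟩]
  · rw [if_neg fun h => hτ ⟨h.1, by linarith⟩]

lemma triangleIntegrand_swap (f g h : ℝ → ℝ) (t τ σ : ℝ) :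
    triangleIntegrand f g h t (τ, σ) = triangleIntegrand f h g t (σ, τ) := by
  simp only [triangleIntegrand, indicator, mem_ofPred_eq, add_comm τ σ, sub_right_comm t τ σ]
  by_cases hp : 0 < σ ∧ 0 < τ ∧ σ + τ < t
  · rw [if_pos ⟨hp.2.1, hp.1, hp.2.2⟩, if_pos hp]; ring
  · rw [if_neg fun h => hp ⟨h.2.1, h.1, h.2.2⟩, if_neg hp]

lemma norm_triangleIntegrand (f g h : ℝ → ℝ) (t : ℝ) (p : ℝ × ℝ) :
    ‖triangleIntegrand f g h t p‖ = triangleIntegrand (|f ·|) (|g ·|) (|h ·|) t p := by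
  simp only [triangleIntegrand, norm_indicator_eq_indicator_norm, Real.norm_eq_abs, abs_mul]

lemma integral_triangleIntegrand_section (f g h : ℝ → ℝ) (t τ : ℝ) :
    ∫ σ, triangleIntegrand f g h t (τ, σ) =
      (Ioo 0 t).indicator (fun τ => conv f g (t - τ) * h τ) τ := by
  rw [triangleIntegrand_section]
  by_cases hτ : τ ∈ Ioo 0 t
  · rw [indicator_of_mem hτ, indicator_of_mem hτ, integral_indicator measurableSet_Ioo,
      integral_mul_const, conv, intervalIntegral.integral_of_le (by linarith [hτ.2]),
      setIntegral_congr_set Ioo_ae_eq_Ioc]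
  · rw [indicator_of_notMem hτ, indicator_of_notMem hτ, Pi.zero_def, integral_zero]

lemma conv_conv_eq_integral_triangleIntegrand (f g h : ℝ → ℝ) {t : ℝ} (ht : 0 ≤ t) :
    conv (conv f g) h t = ∫ τ, ∫ σ, triangleIntegrand f g h t (τ, σ) := by
  simp only [integral_triangleIntegrand_section, integral_indicator measurableSet_Ioo,
    setIntegral_congr_set Ioo_ae_eq_Ioc]
  exact intervalIntegral.integral_of_le ht

section

variable {f g h : ℝ → ℝ}

lemma integrable_triangleIntegrand (hf : Cm1 f) (hg : Cm1 g) (hh : Cm1 h)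
    {t : ℝ} (ht : 0 ≤ t) : Integrable (triangleIntegrand f g h t) (volume.prod volume) := by
  have hT : IsOpen {p : ℝ × ℝ | 0 < p.1 ∧ 0 < p.2 ∧ p.1 + p.2 < t} :=
    (isOpen_lt continuous_const continuous_fst).inter
      ((isOpen_lt continuous_const continuous_snd).inter
        (isOpen_lt (continuous_fst.add continuous_snd) continuous_const))
  have hcont : ContinuousOn (fun p : ℝ × ℝ => f (t - p.1 - p.2) * g p.2 * h p.1)
      {p | 0 < p.1 ∧ 0 < p.2 ∧ p.1 + p.2 < t} := by
    refine ((hf.continuousOn_s7.comp (by fun_prop) fun p hp => ?_).mul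
      (hg.continuousOn_s7.comp (by fun_prop) fun p hp => hp.2.1)).mul
      (hh.continuousOn_s7.comp (by fun_prop) fun p hp => hp.1)
    simp only [mem_Ioi]; linarith [hp.2.2]
  have hmeas : AEStronglyMeasurable (triangleIntegrand f g h t) (volume.prod volume) :=
    (aestronglyMeasurable_indicator_iff hT.measurableSet).2
      (hcont.aestronglyMeasurable hT.measurableSet)
  refine (integrable_prod_iff hmeas).2 ⟨Eventually.of_forall fun τ => ?_, ?_⟩
  · rw [triangleIntegrand_section]
    by_cases hτ : τ ∈ Ioo 0 t
    · rw [indicator_of_mem hτ, integrable_indicator_iff measurableSet_Ioo]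
      exact (((hf.intervalIntegrable_conv_integrand hg (by linarith [hτ.2])).def'.mono_set
        (by rw [uIoc_of_le (by linarith [hτ.2])]; exact Ioo_subset_Ioc_self)).mul_const (h τ))
    · rw [indicator_of_notMem hτ]
      exact integrable_zero _ _ _
  · simp only [norm_triangleIntegrand, integral_triangleIntegrand_section]
    rw [integrable_indicator_iff measurableSet_Ioo]
    exact ((hf.abs.conv hg.abs).intervalIntegrable_conv_integrand hh.abs ht).def'.mono_set
      (by rw [uIoc_of_le ht]; exact Ioo_subset_Ioc_self)

lemma conv_conv_comm (hf : Cm1 f) (hg : Cm1 g) (hh : Cm1 h) :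
    EqOn (conv (conv f g) h) (conv (conv f h) g) (Ioi 0) := fun t ht => by
  rw [conv_conv_eq_integral_triangleIntegrand _ _ _ (le_of_lt ht),
    conv_conv_eq_integral_triangleIntegrand _ _ _ (le_of_lt ht),
    integral_integral_swap (f := fun τ σ => triangleIntegrand f g h t (τ, σ))
      (integrable_triangleIntegrand hf hg hh (le_of_lt ht))]
  simp only [triangleIntegrand_swap f g h]

lemma conv_assoc (hf : Cm1 f) (hg : Cm1 g) (hh : Cm1 h) :
    EqOn (conv (conv f g) h) (conv f (conv g h)) (Ioi 0) := by
  rw [conv_comm f (conv g h), conv_comm f g]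
  exact conv_conv_comm hg hf hh

end

lemma conv_conv_conv_comm {a b c d : ℝ → ℝ} (ha : Cm1 a) (hb : Cm1 b) (hc : Cm1 c)
    (hd : Cm1 d) :
    EqOn (conv (conv a b) (conv c d)) (conv (conv a c) (conv b d)) (Ioi 0) := by
  have hbc_d : EqOn (conv b (conv c d)) (conv c (conv b d)) (Ioi 0) := by
    refine (conv_assoc hb hc hd).symm.trans ?_
    rw [conv_comm b c]
    exact conv_assoc hc hb hd
  exact (conv_assoc ha hb (hc.conv hd)).trans
    ((conv_congr_right a hbc_d).trans (conv_assoc ha hc (hb.conv hd)).symm)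

lemma conv_hker_one (g : ℝ → ℝ) (t : ℝ) : conv (hker 1) g t = ∫ x in (0:ℝ)..t, g x := by
  simp [conv, hker, Real.Gamma_one]

lemma conv_hker_one_hker {p : ℝ} (hp : 0 < p) :
    EqOn (conv (hker 1) (hker p)) (hker (p + 1)) (Ioi 0) := fun t ht => by
  have hΓ : Real.Gamma p ≠ 0 := (Real.Gamma_pos_of_pos hp).ne'
  rw [conv_hker_one]
  simp only [hker, intervalIntegral.integral_div, add_sub_cancel_right, Real.Gamma_add_one hp.ne']
  rw [integral_rpow (Or.inl (by linarith)), sub_add_cancel, Real.zero_rpow hp.ne', sub_zero]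
  field_simp

lemma hker_natCast_succ_s7 {n : ℕ} (hn : 0 < n) :
    EqOn (hker ↑(n + 1)) (conv (hker 1) (hker n)) (Ioi 0) := by
  simpa using (conv_hker_one_hker (p := n) (by exact_mod_cast hn)).symm

lemma conv_hker_natCast_hker {n : ℕ} (hn : 0 < n) {p : ℝ} (hp : 0 < p) :
    EqOn (conv (hker n) (hker p)) (hker (n + p)) (Ioi 0) := by
  induction n, hn using Nat.le_induction with
  | base => simpa [add_comm] using conv_hker_one_hker hp
  | succ n hn ih =>
    refine (conv_congr_left (hker_natCast_succ_s7 hn) _).trans ((conv_assoc (Cm1.hker one_pos)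
      (Cm1.hker (by exact_mod_cast hn)) (Cm1.hker hp)).trans ((conv_congr_right _ ih).trans ?_))
    have := conv_hker_one_hker (p := n + p) (by positivity)
    rwa [show (n : ℝ) + p + 1 = ↑(n + 1) + p by push_cast; ring] at this

lemma hasDerivAt_conv_hker_one {ψ : ℝ → ℝ} (hψ : Cm1 ψ) {t : ℝ} (ht : 0 < t) :
    HasDerivAt (conv (hker 1) ψ) (ψ t) t := by
  rw [funext (conv_hker_one ψ)]
  exact intervalIntegral.integral_hasDerivAt_right (hψ.intervalIntegrable ht.le)
    (hψ.continuousOn_s7.stronglyMeasurableAtFilter isOpen_Ioi t ht)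
    (hψ.continuousOn_s7.continuousAt (Ioi_mem_nhds ht))

lemma iteratedDeriv_conv_hker {ψ : ℝ → ℝ} (hψ : Cm1 ψ) {j : ℕ} (hj : 0 < j) :
    EqOn (iteratedDeriv j (conv (hker j) ψ)) ψ (Ioi 0) := by
  induction j, hj using Nat.le_induction with
  | base => exact fun t ht => by simpa using (hasDerivAt_conv_hker_one hψ ht).deriv
  | succ j hj ih =>
    have hj' : (0 : ℝ) < j := by exact_mod_cast hj
    have hsplit : EqOn (conv (hker ↑(j + 1)) ψ) (conv (hker 1) (conv (hker j) ψ)) (Ioi 0) :=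
      (conv_congr_left (hker_natCast_succ_s7 hj) ψ).trans
        (conv_assoc (Cm1.hker one_pos) (Cm1.hker hj') hψ)
    have hderiv : EqOn (deriv (conv (hker 1) (conv (hker j) ψ))) (conv (hker j) ψ) (Ioi 0) :=
      fun t ht => (hasDerivAt_conv_hker_one ((Cm1.hker hj').conv hψ) ht).deriv
    refine (hsplit.iteratedDeriv_of_isOpen isOpen_Ioi (j + 1)).trans ?_
    rw [iteratedDeriv_succ']
    exact (hderiv.iteratedDeriv_of_isOpen isOpen_Ioi j).trans ih

lemma convPow_succ (g : ℝ → ℝ) {j : ℕ} (hj : 0 < j) :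
    convPow g (j + 1) = conv g (convPow g j) := by
  obtain ⟨i, rfl⟩ := Nat.exists_eq_add_of_lt hj
  rfl

lemma Cm1.convPow {g : ℝ → ℝ} (hg : Cm1 g) {j : ℕ} (hj : 0 < j) : Cm1 (convPow g j) := by
  induction j, hj using Nat.le_induction with
  | base => exact hg
  | succ j hj ih => rw [convPow_succ g hj]; exact hg.conv ih

lemma GFD_congr (n : ℕ) (k : ℝ → ℝ) {F G : ℝ → ℝ} (h : EqOn F G (Ioi 0)) :
    EqOn (GFD n k F) (GFD n k G) (Ioi 0) :=
  (conv_congr_right k h).iteratedDeriv_of_isOpen isOpen_Ioi n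

lemma iterate_GFD_congr (n : ℕ) (k : ℝ → ℝ) (j : ℕ) {F G : ℝ → ℝ}
    (h : EqOn F G (Ioi 0)) :
    EqOn ((GFD n k)^[j] F) ((GFD n k)^[j] G) (Ioi 0) := by
  induction j generalizing F G with
  | zero => exact h
  | succ j ih => simpa only [Function.iterate_succ_apply] using ih (GFD_congr n k h)

namespace SonineL

variable {n : ℕ} {κ k ψ : ℝ → ℝ}

lemma cm1_left (hκk : SonineL n κ k) : Cm1 κ := hκk.1

lemma cm1_right (hκk : SonineL n κ k) : Cm1 k := .of_Cm10 hκk.2.1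

lemma conv_eq_hker (hκk : SonineL n κ k) : EqOn (conv k κ) (hker n) (Ioi 0) := by
  rw [conv_comm]
  exact hκk.2.2

lemma conv_convPow_eq_hker (hκk : SonineL n κ k) (hn : 0 < n) {j : ℕ} (hj : 0 < j) :
    EqOn (conv (convPow k j) (convPow κ j)) (hker ↑(n * j)) (Ioi 0) := by
  induction j, hj using Nat.le_induction with
  | base => simpa [convPow] using hκk.conv_eq_hker
  | succ j hj ih =>
    rw [convPow_succ k hj, convPow_succ κ hj]
    refine (conv_conv_conv_comm hκk.cm1_right (hκk.cm1_right.convPow hj) hκk.cm1_left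
      (hκk.cm1_left.convPow hj)).trans ?_
    refine (conv_congr_left hκk.conv_eq_hker _).trans ((conv_congr_right _ ih).trans ?_)
    rw [show n * (j + 1) = n + n * j by ring, Nat.cast_add]
    exact conv_hker_natCast_hker hn (by positivity)

lemma GFD_conv (hκk : SonineL n κ k) (hn : 0 < n) (hψ : Cm1 ψ) :
    EqOn (GFD n k (conv κ ψ)) ψ (Ioi 0) := by
  have hrep : EqOn (conv k (conv κ ψ)) (conv (hker n) ψ) (Ioi 0) :=
    (conv_assoc hκk.cm1_right hκk.cm1_left hψ).symm.trans (conv_congr_left hκk.conv_eq_hker ψ)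
  exact (hrep.iteratedDeriv_of_isOpen isOpen_Ioi n).trans (iteratedDeriv_conv_hker hψ hn)

lemma iterate_GFD_conv_convPow (hκk : SonineL n κ k) (hn : 0 < n) (hψ : Cm1 ψ) {j : ℕ}
    (hj : 0 < j) : EqOn ((GFD n k)^[j] (conv (convPow κ j) ψ)) ψ (Ioi 0) := by
  induction j, hj using Nat.le_induction with
  | base => exact hκk.GFD_conv hn hψ
  | succ j hj ih =>
    have hstep :
        EqOn (GFD n k (conv (convPow κ (j + 1)) ψ)) (conv (convPow κ j) ψ) (Ioi 0) := by
      rw [convPow_succ κ hj]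
      exact (GFD_congr n k (conv_assoc hκk.cm1_left (hκk.cm1_left.convPow hj) hψ)).trans
        (hκk.GFD_conv hn ((hκk.cm1_left.convPow hj).conv hψ))
    rw [Function.iterate_succ_apply]
    exact (iterate_GFD_congr n k j hstep).trans ih

lemma iteratedDeriv_conv_convPow_conv_convPow (hκk : SonineL n κ k) (hn : 0 < n) (hψ : Cm1 ψ)
    {j : ℕ} (hj : 0 < j) :
    EqOn (iteratedDeriv (n * j) (conv (convPow k j) (conv (convPow κ j) ψ))) ψ (Ioi 0) := by
  have hrep :
      EqOn (conv (convPow k j) (conv (convPow κ j) ψ)) (conv (hker ↑(n * j)) ψ) (Ioi 0) :=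
    (conv_assoc (hκk.cm1_right.convPow hj) (hκk.cm1_left.convPow hj) hψ).symm.trans
      (conv_congr_left (hκk.conv_convPow_eq_hker hn hj) ψ)
  exact (hrep.iteratedDeriv_of_isOpen isOpen_Ioi _).trans
    (iteratedDeriv_conv_hker hψ (Nat.mul_pos hn hj))

end SonineL

/-- on `C^m_{-1,(κ)}(0,∞)` the `m`-fold sequential GFD coincides
with the single GFD with kernel `k^{<m>}`:
`(D^{<m>}_{(k)} f)(t) = (d^{nm}/dt^{nm})(k^{<m>} * f)(t)`. -/
theorem seq_GFD_eq_GFD_convPow_kernel (n m : ℕ) (hn : 0 < n) (hm : 0 < m)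
    (κ k : ℝ → ℝ) (hκk : SonineL n κ k) (f φ : ℝ → ℝ) (hφ : Cm1 φ)
    (hf : ∀ t : ℝ, 0 < t → f t = conv (convPow κ m) φ t) :
    ∀ t : ℝ, 0 < t →
      (GFD n k)^[m] f t = iteratedDeriv (n * m) (conv (convPow k m) f) t := by
  intro t ht
  have hf' : EqOn f (conv (convPow κ m) φ) (Ioi 0) := hf
  rw [iterate_GFD_congr n k m hf' ht,
    (conv_congr_right _ hf').iteratedDeriv_of_isOpen isOpen_Ioi _ ht,
    hκk.iterate_GFD_conv_convPow hn hφ hm ht,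
    hκk.iteratedDeriv_conv_convPow_conv_convPow hn hφ hm ht]
end
end

section
/- The space C_{-1}(0,∞) is closed under the Laplace convolution: if f, g ∈ C_{-1}(0,∞), then the function (f*g)(t) = ∫_0^t f(t−τ)g(τ)dτ is defined for all t > 0 and belongs to C_{-1}(0,∞). -/
noncomputable section

/-!
Write `f t = t ^ p * f₁ t` and `g t = t ^ q * g₁ t`, where `f₁` and `g₁` may be taken continuous
on all of `ℝ`. The substitution `τ = t s` gives, for `t > 0`,
`(f * g) t = t ^ (p + q + 1) * ∫₀¹ s ^ q (1 - s) ^ p f₁ (t (1 - s)) g₁ (t s) ds`.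
The weight `s ^ q (1 - s) ^ p` is integrable on `[0, 1]` since `p, q > -1`, and the rest of the
integrand is jointly continuous, so dominated convergence makes the integral continuous in `t`.
-/

open MeasureTheory Set Filter intervalIntegral Real

theorem Cm1.exists_continuous {f : ℝ → ℝ} (hf : Cm1 f) :
    ∃ q : ℝ, -1 < q ∧ ∃ f₁ : ℝ → ℝ, Continuous f₁ ∧ ∀ t : ℝ, 0 < t → f t = t ^ q * f₁ t := by
  obtain ⟨q, hq, f₁, hf₁, hf⟩ := hf
  refine ⟨q, hq, fun t => f₁ (max t 0), ?_, fun t ht => by simp only [hf t ht, max_eq_left ht.le]⟩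
  exact hf₁.comp_continuous (continuous_id.max continuous_const) fun t => le_max_right t 0

theorem intervalIntegrable_rpow_mul_sub_rpow_half {p q t : ℝ} (hq : -1 < q) (ht : 0 < t) :
    IntervalIntegrable (fun τ => τ ^ q * (t - τ) ^ p) volume 0 (t / 2) := by
  refine (intervalIntegrable_rpow' hq).mul_continuousOn ?_
  refine (continuousOn_const.sub continuousOn_id).rpow_const fun τ hτ => Or.inl ?_
  rw [uIcc_of_le (by positivity)] at hτ
  show t - τ ≠ 0
  exact (sub_pos.2 (by linarith [hτ.2])).ne'

theorem intervalIntegrable_rpow_mul_sub_rpow {p q t : ℝ} (hp : -1 < p) (hq : -1 < q)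
    (ht : 0 < t) : IntervalIntegrable (fun τ => τ ^ q * (t - τ) ^ p) volume 0 t := by
  -- on `[t/2, t]` the integrand is the reflection `τ ↦ t - τ` of the one with `p, q` swapped
  have hright := ((intervalIntegrable_rpow_mul_sub_rpow_half (p := q) hp ht).comp_sub_left t).symm
  simp only [sub_zero, sub_sub_cancel, sub_half] at hright
  exact (intervalIntegrable_rpow_mul_sub_rpow_half hq ht).trans
    (hright.congr fun τ _ => mul_comm _ _)

theorem continuous_parametric_intervalIntegral_smul {X E : Type*} [TopologicalSpace X]
    [LocallyCompactSpace X] [FirstCountableTopology X] [NormedAddCommGroup E] [NormedSpace ℝ E]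
    {μ : Measure ℝ} {w : ℝ → ℝ} {k : X → ℝ → E} {a b : ℝ} (hw : IntervalIntegrable w μ a b)
    (hk : Continuous (Function.uncurry k)) :
    Continuous fun x => ∫ t in a..b, w t • k x t ∂μ := by
  refine continuous_iff_continuousAt.2 fun x₀ => ?_
  obtain ⟨K, hK, hKx₀⟩ := exists_compact_mem_nhds x₀
  obtain ⟨C, hC⟩ := (hK.prod isCompact_uIcc).exists_bound_of_continuousOn hk.continuousOn
  refine continuousAt_of_dominated_interval (bound := fun t => ‖w t‖ * C)
    (Eventually.of_forall fun x => hw.def'.aestronglyMeasurable.smul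
      (hk.uncurry_left x).aestronglyMeasurable) ?_ (hw.norm.mul_const C)
    (Eventually.of_forall fun t _ => ((hk.uncurry_right t).const_smul (w t)).continuousAt)
  filter_upwards [hKx₀] with x hx
  refine Eventually.of_forall fun t ht => ?_
  rw [norm_smul]
  exact mul_le_mul_of_nonneg_left (hC (x, t) ⟨hx, uIoc_subset_uIcc ht⟩) (norm_nonneg _)

theorem integral_rpow_mul_sub_rpow_eq {p q t : ℝ} (ht : 0 < t) (φ : ℝ → ℝ → ℝ) :
    ∫ τ in 0..t, τ ^ q * (t - τ) ^ p * φ (t - τ) τ =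
      t ^ (p + q + 1) * ∫ s in 0..1, s ^ q * (1 - s) ^ p * φ (t * (1 - s)) (t * s) := by
  have hscale := smul_integral_comp_mul_left (a := 0) (b := 1)
    (fun τ => τ ^ q * (t - τ) ^ p * φ (t - τ) τ) t
  simp only [mul_zero, mul_one, smul_eq_mul] at hscale
  rw [← hscale, ← intervalIntegral.integral_const_mul, ← intervalIntegral.integral_const_mul]
  refine integral_congr fun s hs => ?_
  rw [uIcc_of_le zero_le_one] at hs
  rw [show t - t * s = t * (1 - s) by ring, mul_rpow ht.le hs.1,
    mul_rpow ht.le (sub_nonneg.2 hs.2), rpow_add ht, rpow_add ht, rpow_one]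
  ring

/-- `C_{-1}(0,∞)` is closed under the Laplace convolution; in
particular the convolution integral exists for every `t > 0`. -/
theorem Cm1_closed_under_conv (f g : ℝ → ℝ) (hf : Cm1 f) (hg : Cm1 g) :
    (∀ t : ℝ, 0 < t →
      IntervalIntegrable (fun τ => f (t - τ) * g τ) MeasureTheory.volume 0 t) ∧
    Cm1 (conv f g) := by
  obtain ⟨p, hp, f₁, hf₁, hf⟩ := hf.exists_continuous
  obtain ⟨q, hq, g₁, hg₁, hg⟩ := hg.exists_continuous
  have hrep : ∀ t, EqOn (fun τ => τ ^ q * (t - τ) ^ p * (f₁ (t - τ) * g₁ τ))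
      (fun τ => f (t - τ) * g τ) (Ioo 0 t) := by
    intro t τ hτ
    simp only [hf _ (sub_pos.2 hτ.2), hg _ hτ.1]
    ring
  set H : ℝ → ℝ := fun t => ∫ s in 0..1, s ^ q * (1 - s) ^ p * (f₁ (t * (1 - s)) * g₁ (t * s))
  have hH : Continuous H :=
    continuous_parametric_intervalIntegral_smul (w := fun s => s ^ q * (1 - s) ^ p)
      (intervalIntegrable_rpow_mul_sub_rpow hp hq one_pos) (by fun_prop)
  refine ⟨fun t ht => ?_, p + q + 1, by linarith, H, hH.continuousOn, fun t ht => ?_⟩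
  · have hweight := intervalIntegrable_rpow_mul_sub_rpow hp hq ht
    exact (hweight.mul_continuousOn (by fun_prop)).congr_uIoo (uIoo_of_le ht.le ▸ hrep t)
  · rw [conv, ← integral_congr_Ioo_of_le ht.le (hrep t)]
    exact integral_rpow_mul_sub_rpow_eq ht fun u v => f₁ u * g₁ v
end
end

section
/- Let n ∈ ℕ, α ∈ (n−1, n), λ ∈ ℂ, and 0 ≤ i ≤ n−1. Then for all t > 0 the i-th derivative of the function t ↦ t^{α−1} E_{α,α}(λ t^α) is given by (d^i/dt^i)[ t^{α−1} E_{α,α}(λ t^α) ] = t^{α−1−i} E_{α,α−i}(λ t^α). -/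
noncomputable section

/-- The two-parameter Mittag-Leffler function `E_{α,β}(z) = Σ_j z^j/Γ(αj+β)`
(with `1/Γ` extended by `0` at the poles, as in Mathlib's `Complex.Gamma`). -/
def mittagLeffler (α β z : ℂ) : ℂ := ∑' j : ℕ, z ^ j / Complex.Gamma (α * j + β)

/-!
For `t > 0`, `t^(β-1) E_{α,β}(λ t^α) = Σ_j λ^j t^(αj+β-1) / Γ(αj+β)`, and since
`Γ(x + 1) = x Γ(x)` the termwise derivative is the same series with `β - 1` in place of `β`.
Termwise differentiation is legitimate for `α > 0`, `β > 1`: the majorant `Σ c^j / Γ(αj+b)`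
converges by the ratio test, because `Γ(x) / Γ(x + α) → 0`, which for `α < 1` comes from the
log-convexity of `Γ`. Differentiating `i` times needs `β - m > 1` for all `m < i`, i.e. `i < β`;
here `β = α > n - 1 ≥ i`.
-/

open Filter Topology

namespace Real

theorem mul_Gamma_le_rpow_mul_Gamma_add {x a : ℝ} (hx : 0 < x) (ha₀ : 0 < a) (ha₁ : a < 1) :
    x * Gamma x ≤ (x + a) ^ (1 - a) * Gamma (x + a) := by
  have hxa : 0 < x + a := by positivity
  have hΓ : 0 < Gamma (x + a) := Gamma_pos_of_pos hxa
  calc x * Gamma x = Gamma (a * (x + a) + (1 - a) * (x + a + 1)) := by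
        rw [← Gamma_add_one hx.ne']; ring_nf
    _ ≤ Gamma (x + a) ^ a * Gamma (x + a + 1) ^ (1 - a) :=
        Gamma_mul_add_mul_le_rpow_Gamma_mul_rpow_Gamma hxa (by positivity) ha₀ (by linarith)
          (by ring)
    _ = (x + a) ^ (1 - a) * Gamma (x + a) ^ (a + (1 - a)) := by
        rw [Gamma_add_one hxa.ne', mul_rpow hxa.le hΓ.le, rpow_add hΓ]; ring
    _ = (x + a) ^ (1 - a) * Gamma (x + a) := by norm_num

theorem tendsto_Gamma_div_Gamma_add_atTop {a : ℝ} (ha : 0 < a) :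
    Tendsto (fun x => Gamma x / Gamma (x + a)) atTop (𝓝 0) := by
  set b := min a (1 / 2)
  have hb₀ : 0 < b := by positivity
  have hb₁ : b < 1 := (min_le_right _ _).trans_lt (by norm_num)
  have hbound : Tendsto (fun x => 2 * (x + b) ^ (-b)) atTop (𝓝 0) := by
    simpa using ((tendsto_rpow_neg_atTop hb₀).comp
      (tendsto_atTop_add_const_right _ b tendsto_id)).const_mul 2
  have hnonneg : ∀ᶠ x in atTop, 0 ≤ Gamma x / Gamma (x + a) := by
    filter_upwards [eventually_gt_atTop 0] with x hx
    exact div_nonneg (Gamma_pos_of_pos hx).le (Gamma_pos_of_pos (by positivity)).le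
  refine squeeze_zero' hnonneg ?_ hbound
  filter_upwards [eventually_ge_atTop 2] with x hx
  have hx₀ : 0 < x := by linarith
  have hxb : 0 < x + b := by positivity
  have hΓb : 0 < Gamma (x + b) := Gamma_pos_of_pos hxb
  have hmono : Gamma (x + b) ≤ Gamma (x + a) :=
    Gamma_strictMonoOn_Ici.monotoneOn (Set.mem_Ici.mpr (by linarith))
      (Set.mem_Ici.mpr (by linarith))
      (by linarith [min_le_left a (1 / 2)])
  calc Gamma x / Gamma (x + a) ≤ Gamma x / Gamma (x + b) :=
        div_le_div_of_nonneg_left (Gamma_pos_of_pos hx₀).le hΓb hmono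
    _ ≤ (x + b) ^ (1 - b) / x := by
        rw [div_le_div_iff₀ hΓb hx₀, mul_comm]
        exact mul_Gamma_le_rpow_mul_Gamma_add hx₀ hb₀ hb₁
    _ = (x + b) ^ (-b) * ((x + b) / x) := by
        rw [sub_eq_neg_add, rpow_add hxb, rpow_one]; ring
    _ ≤ (x + b) ^ (-b) * 2 := by
        gcongr
        rw [div_le_iff₀ hx₀]
        linarith [min_le_right a (1 / 2)]
    _ = 2 * (x + b) ^ (-b) := mul_comm _ _

theorem summable_pow_div_Gamma {α b : ℝ} (hα : 0 < α) (hb : 0 < b) (c : ℝ) :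
    Summable fun j : ℕ => c ^ j / Gamma (α * j + b) := by
  have hx : ∀ j : ℕ, 0 < α * j + b := fun j => by positivity
  have hxtop : Tendsto (fun j : ℕ => α * j + b) atTop atTop :=
    tendsto_atTop_add_const_right _ b
      ((tendsto_natCast_atTop_atTop (R := ℝ)).const_mul_atTop hα)
  have hratio : ∀ᶠ j : ℕ in atTop, |c| * (Gamma (α * j + b) / Gamma (α * j + b + α)) < 1 / 2 :=
    hxtop.eventually <| Tendsto.eventually_lt_const (by norm_num : (0 : ℝ) < 1 / 2) <| by
      simpa using (tendsto_Gamma_div_Gamma_add_atTop hα).const_mul |c|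
  refine summable_of_ratio_norm_eventually_le (r := 1 / 2) (by norm_num) ?_
  filter_upwards [hratio] with j hj
  have hΓ : 0 < Gamma (α * j + b) := Gamma_pos_of_pos (hx j)
  have hΓ' : 0 < Gamma (α * j + b + α) := Gamma_pos_of_pos (by linarith [hx j])
  have hsucc : α * ((j + 1 : ℕ) : ℝ) + b = α * j + b + α := by push_cast; ring
  rw [hsucc, norm_div, norm_div, norm_pow, norm_pow, norm_of_nonneg hΓ.le,
    norm_of_nonneg hΓ'.le, norm_eq_abs]
  calc |c| ^ (j + 1) / Gamma (α * j + b + α)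
      = |c| * (Gamma (α * j + b) / Gamma (α * j + b + α)) * (|c| ^ j / Gamma (α * j + b)) := by
        field_simp; ring
    _ ≤ 1 / 2 * (|c| ^ j / Gamma (α * j + b)) := by gcongr

end Real

def mittagLefflerKernel (α β : ℝ) (lam : ℂ) (t : ℝ) : ℂ :=
  ((t ^ (β - 1) : ℝ) : ℂ) * mittagLeffler α β (lam * ((t ^ α : ℝ) : ℂ))

def mittagLefflerKernelTerm (α β : ℝ) (lam : ℂ) (j : ℕ) (t : ℝ) : ℂ :=
  lam ^ j / Complex.Gamma (α * j + β : ℝ) * ((t ^ (α * j + β - 1) : ℝ) : ℂ)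

section MittagLefflerKernel

variable (lam : ℂ)

theorem mittagLefflerKernel_eq_tsum (α β : ℝ) {t : ℝ} (ht : 0 < t) :
    mittagLefflerKernel α β lam t = ∑' j, mittagLefflerKernelTerm α β lam j t := by
  rw [mittagLefflerKernel, mittagLeffler, ← tsum_mul_left]
  congr 1 with j
  have hpow : ((t ^ α : ℝ) : ℂ) ^ j = ((t ^ (α * j) : ℝ) : ℂ) := by
    rw [← Complex.ofReal_pow, ← Real.rpow_natCast, ← Real.rpow_mul ht.le]
  have hexp : t ^ (α * j + β - 1) = t ^ (β - 1) * t ^ (α * j) := by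
    rw [← Real.rpow_add ht]; ring_nf
  rw [mittagLefflerKernelTerm, mul_pow, hpow, hexp]
  push_cast
  ring

-- `e / Γ(e + 1) = 1 / Γ(e)` holds for every `e`, poles included, since `1 / Γ` is entire.
theorem hasDerivAt_mittagLefflerKernelTerm (α β : ℝ) (j : ℕ) {t : ℝ} (ht : 0 < t) :
    HasDerivAt (mittagLefflerKernelTerm α β lam j)
      (mittagLefflerKernelTerm α (β - 1) lam j t) t := by
  set e := α * j + β - 1
  have hterm : mittagLefflerKernelTerm α β lam j =
      fun s => lam ^ j / Complex.Gamma (e + 1 : ℝ) * ((s ^ e : ℝ) : ℂ) := by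
    funext s
    simp only [mittagLefflerKernelTerm, e, sub_add_cancel]
  have hterm' : mittagLefflerKernelTerm α (β - 1) lam j t =
      lam ^ j / Complex.Gamma (e : ℝ) * ((t ^ (e - 1) : ℝ) : ℂ) := by
    simp only [mittagLefflerKernelTerm, e, add_sub_assoc']
  rw [hterm, hterm']
  refine (((Real.hasDerivAt_rpow_const (Or.inl ht.ne')).ofReal_comp).const_mul _).congr_deriv ?_
  push_cast
  rw [div_eq_mul_inv, div_eq_mul_inv, Complex.one_div_Gamma_eq_self_mul_one_div_Gamma_add_one e]
  ring

theorem norm_mittagLefflerKernelTerm_le {α β : ℝ} (hα : 0 ≤ α) (hβ : 0 < β) (j : ℕ) {y R : ℝ}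
    (hy : 0 < y) (hyR : y ≤ R) :
    ‖mittagLefflerKernelTerm α β lam j y‖ ≤
      y ^ (β - 1) * ((‖lam‖ * R ^ α) ^ j / Real.Gamma (α * j + β)) := by
  have hΓ : 0 < Real.Gamma (α * j + β) := Real.Gamma_pos_of_pos (by positivity)
  have hpow : y ^ (α * j + β - 1) = (y ^ α) ^ j * y ^ (β - 1) := by
    rw [← Real.rpow_natCast, ← Real.rpow_mul hy.le, ← Real.rpow_add hy]
    ring_nf
  have hyα : y ^ α ≤ R ^ α := Real.rpow_le_rpow hy.le hyR hα
  rw [mittagLefflerKernelTerm, Complex.Gamma_ofReal, norm_mul, norm_div, norm_pow,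
    Complex.norm_real, Complex.norm_real, Real.norm_of_nonneg hΓ.le,
    Real.norm_of_nonneg (by positivity), hpow]
  calc ‖lam‖ ^ j / Real.Gamma (α * j + β) * ((y ^ α) ^ j * y ^ (β - 1))
      ≤ ‖lam‖ ^ j / Real.Gamma (α * j + β) * ((R ^ α) ^ j * y ^ (β - 1)) := by gcongr
    _ = y ^ (β - 1) * ((‖lam‖ * R ^ α) ^ j / Real.Gamma (α * j + β)) := by ring

theorem hasDerivAt_mittagLefflerKernel {α β : ℝ} (hα : 0 < α) (hβ : 1 < β) {t : ℝ}
    (ht : 0 < t) :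
    HasDerivAt (mittagLefflerKernel α β lam) (mittagLefflerKernel α (β - 1) lam t) t := by
  have hmem : t ∈ Set.Ioo (t / 2) (2 * t) := ⟨by linarith, by linarith⟩
  set M := max ((t / 2) ^ (β - 2)) ((2 * t) ^ (β - 2))
  have hM : ∀ y ∈ Set.Ioo (t / 2) (2 * t), y ^ (β - 1 - 1) ≤ M := by
    rintro y ⟨hy₁, hy₂⟩
    rw [sub_sub, one_add_one_eq_two]
    rcases le_total 0 (β - 2) with h | h
    · exact le_max_of_le_right (Real.rpow_le_rpow (by linarith) hy₂.le h)
    · exact le_max_of_le_left (Real.rpow_le_rpow_of_nonpos (by linarith) hy₁.le h)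
  have hseries : HasDerivAt (fun s => ∑' j, mittagLefflerKernelTerm α β lam j s)
      (∑' j, mittagLefflerKernelTerm α (β - 1) lam j t) t := by
    refine hasDerivAt_tsum_of_isPreconnected
      (u := fun j : ℕ => M * ((‖lam‖ * (2 * t) ^ α) ^ j / Real.Gamma (α * j + (β - 1))))
      ((Real.summable_pow_div_Gamma hα (by linarith) _).mul_left M) isOpen_Ioo
      isPreconnected_Ioo
      (fun j y hy => hasDerivAt_mittagLefflerKernelTerm lam α β j (by linarith [hy.1]))
      (fun j y hy => ?_) hmem ?_ hmem
    · refine (norm_mittagLefflerKernelTerm_le lam hα.le (by linarith) j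
        (by linarith [hy.1]) hy.2.le).trans ?_
      gcongr
      exact hM y hy
    · refine Summable.of_norm_bounded
        ((Real.summable_pow_div_Gamma hα (by linarith) (‖lam‖ * t ^ α)).mul_left (t ^ (β - 1)))
        fun j => norm_mittagLefflerKernelTerm_le lam hα.le (by linarith) j ht le_rfl
  rw [mittagLefflerKernel_eq_tsum lam _ _ ht]
  refine hseries.congr_of_eventuallyEq ?_
  filter_upwards [Ioi_mem_nhds ht] with s hs
  exact mittagLefflerKernel_eq_tsum lam α β hs

theorem iteratedDeriv_mittagLefflerKernel {α β : ℝ} (hα : 0 < α) {i : ℕ} (hi : (i : ℝ) < β) :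
    Set.EqOn (iteratedDeriv i (mittagLefflerKernel α β lam))
      (mittagLefflerKernel α (β - i) lam) (Set.Ioi 0) := by
  induction i with
  | zero => intro t _; simp
  | succ m ih =>
    intro t ht
    have hm : (m : ℝ) + 1 < β := by exact_mod_cast hi
    have hnear : iteratedDeriv m (mittagLefflerKernel α β lam) =ᶠ[𝓝 t]
        mittagLefflerKernel α (β - m) lam := by
      filter_upwards [Ioi_mem_nhds ht] with s hs
      exact ih (by linarith) hs
    rw [iteratedDeriv_succ, hnear.deriv_eq,
      (hasDerivAt_mittagLefflerKernel lam hα (by linarith) ht).deriv]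
    push_cast
    ring_nf

end MittagLefflerKernel

theorem iteratedDeriv_mittagLeffler_general (n : ℕ) (hn : 0 < n) (α : ℝ)
    (hα₁ : (n : ℝ) - 1 < α) (lam : ℂ) (i : ℕ) (hi : i ≤ n - 1) :
    ∀ t : ℝ, 0 < t →
      iteratedDeriv i
        (fun s : ℝ => ((s ^ (α - 1) : ℝ) : ℂ) *
          mittagLeffler α α (lam * ((s ^ α : ℝ) : ℂ))) t =
      ((t ^ (α - 1 - i) : ℝ) : ℂ) *
        mittagLeffler α ((α : ℂ) - (i : ℂ)) (lam * ((t ^ α : ℝ) : ℂ)) := by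
  intro t ht
  have hiα : (i : ℝ) < α := by
    have : (i : ℝ) + 1 ≤ n := by exact_mod_cast (by omega : i + 1 ≤ n)
    linarith
  have hα : 0 < α := (Nat.cast_nonneg i).trans_lt hiα
  rw [sub_right_comm, show (α : ℂ) - i = ((α - i : ℝ) : ℂ) by push_cast; rfl]
  exact iteratedDeriv_mittagLefflerKernel lam hα hiα ht

/-- for `n ∈ ℕ`, `α ∈ (n-1,n)`, `λ ∈ ℂ` and `0 ≤ i ≤ n-1`, for all
`t > 0`,
`(d^i/dt^i)[t^{α-1} E_{α,α}(λ t^α)] = t^{α-1-i} E_{α,α-i}(λ t^α)`. -/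
theorem iteratedDeriv_mittagLeffler (n : ℕ) (hn : 0 < n) (α : ℝ)
    (hα₁ : (n : ℝ) - 1 < α) (hα₂ : α < n) (lam : ℂ) (i : ℕ) (hi : i ≤ n - 1) :
    ∀ t : ℝ, 0 < t →
      iteratedDeriv i
        (fun s : ℝ => ((s ^ (α - 1) : ℝ) : ℂ) *
          mittagLeffler α α (lam * ((s ^ α : ℝ) : ℂ))) t =
      ((t ^ (α - 1 - i) : ℝ) : ℂ) *
        mittagLeffler α ((α : ℂ) - (i : ℂ)) (lam * ((t ^ α : ℝ) : ℂ)) :=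
  iteratedDeriv_mittagLeffler_general n hn α hα₁ lam i hi
end
end
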